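/- arXiv:1812.02544 — 3 statements merged into one kernel-verified Lean document; each statement's English description precedes it below -/
import Mathlib

section
/- Assume m ≥ 2. Then for every z ∈ ℂ, C(z) = Σ_{i=0}^{m−1} Σ_{j=1}^{n} Σ_{t=1}^{n} (V_i)_{tj} · Q̃_{(i,j),(i−1,t)} · λ_t · z^{m−2} · ∏_{ℓ≠t}(z^m − λ_ℓ^m), where Q̃_{(i,j),(i−1,t)} denotes the entry of Q̃ in row (i,j) and column (i−1,t) (indices in ℤ/mℤ). -/
open Matrix BigOperators

noncomputable section

/-- The block matrix `L̃` with diagonal blocks `Λ = diag(λ₁,…,λₙ)` at positions `(h, h+1)`: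
its entry in row `(h,j)` and column `(i,k)` is `λⱼ` if `k = j` and `i = h + 1` in `ℤ/mℤ`,
and `0` otherwise. -/
def Ltilde (m n : ℕ) (lam : Fin n → ℂ) :
    Matrix (ZMod m × Fin n) (ZMod m × Fin n) ℂ :=
  Matrix.of fun p q => if q.2 = p.2 ∧ q.1 = p.1 + 1 then lam p.2 else 0

/-- `|g| = g₀ + g₁ + ⋯ + g_{m-1}`. -/
def gAbs (m : ℕ) (g : ZMod m → ℂ) : ℂ :=
  ∑ s ∈ Finset.range m, g (s : ZMod m)

/-- `cᵢ = Σ_{r=0}^{i} g_r − Σ_{s=0}^{m−1} ((m−s)/m)·g_s`, the index `i` read modulo `m`. -/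
def cConst (m : ℕ) (g : ZMod m → ℂ) (i : ZMod m) : ℂ :=
  (∑ r ∈ Finset.range (i.val + 1), g (r : ZMod m)) -
    ∑ s ∈ Finset.range m, (((m : ℂ) - (s : ℂ)) / (m : ℂ)) * g (s : ZMod m)

/-- The spin matrix `Q̃` built from `V i = ṽᵢ·w̃ᵢ`: its entry in row `(h,j)` and column `(i,k)`
vanishes unless `h = i + 1` in `ℤ/mℤ`, in which case (taking the representative
`i ∈ {0,…,m−1}`) it equals
`φⱼ + (1/λⱼ)·(cᵢ + Σ_{r=0}^{i}(V_r)ⱼⱼ − Σ_{s=0}^{m−1}((m−s)/m)·(V_s)ⱼⱼ)` if `k = j`, and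
`−Σ_{h′=0}^{m−1}(V_{i−h′})ⱼₖ·λⱼ^{m−h′−1}·λₖ^{h′}/(λⱼ^m − λₖ^m)` if `k ≠ j`. -/
def QtildeS (m n : ℕ) (g : ZMod m → ℂ) (lam phi : Fin n → ℂ)
    (V : ZMod m → Matrix (Fin n) (Fin n) ℂ) :
    Matrix (ZMod m × Fin n) (ZMod m × Fin n) ℂ :=
  Matrix.of fun p q =>
    if p.1 = q.1 + 1 then
      if q.2 = p.2 then
        phi p.2 + (1 / lam p.2) *
          (cConst m g q.1 + (∑ r ∈ Finset.range (q.1.val + 1), (V (r : ZMod m)) p.2 p.2) -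
            ∑ s ∈ Finset.range m, (((m : ℂ) - (s : ℂ)) / (m : ℂ)) * (V (s : ZMod m)) p.2 p.2)
      else
        -∑ h' ∈ Finset.range m,
          (V (q.1 - (h' : ZMod m))) p.2 q.2 * lam p.2 ^ (m - h' - 1) * lam q.2 ^ h' /
            (lam p.2 ^ m - lam q.2 ^ m)
    else 0

/-- `A(z) = det(z·1 − L̃)`. -/
def Afun (m n : ℕ) [NeZero m] (lam : Fin n → ℂ) (z : ℂ) : ℂ :=
  (z • (1 : Matrix (ZMod m × Fin n) (ZMod m × Fin n) ℂ) - Ltilde m n lam).det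

/-- `D(z) = tr(Q̃ · adj(z·1 − L̃))` (spin case). -/
def DfunS (m n : ℕ) [NeZero m] (g : ZMod m → ℂ) (lam phi : Fin n → ℂ)
    (V : ZMod m → Matrix (Fin n) (Fin n) ℂ) (z : ℂ) : ℂ :=
  Matrix.trace (QtildeS m n g lam phi V *
    (z • (1 : Matrix (ZMod m × Fin n) (ZMod m × Fin n) ℂ) - Ltilde m n lam).adjugate)

/-- The block-diagonal matrix `B` with entry `(V_h)ⱼₖ` in row `(h,j)` and column `(h,k)`,
and `0` in positions with differing first indices. -/
def Bmat (m n : ℕ) (V : ZMod m → Matrix (Fin n) (Fin n) ℂ) :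
    Matrix (ZMod m × Fin n) (ZMod m × Fin n) ℂ :=
  Matrix.of fun p q => if p.1 = q.1 then (V p.1) p.2 q.2 else 0

/-- `C(z) = tr(Q̃ · adj(z·1 − L̃) · B)` (spin case). -/
def CfunS (m n : ℕ) [NeZero m] (g : ZMod m → ℂ) (lam phi : Fin n → ℂ)
    (V : ZMod m → Matrix (Fin n) (Fin n) ℂ) (z : ℂ) : ℂ :=
  Matrix.trace (QtildeS m n g lam phi V *
    (z • (1 : Matrix (ZMod m × Fin n) (ZMod m × Fin n) ℂ) - Ltilde m n lam).adjugate *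
    Bmat m n V)

/-!
`L̃` is block diagonal with blocks `λⱼ • P`, where `P` is the permutation matrix of `r ↦ r + 1`
on `ℤ/mℤ`. As `P ^ m = 1`, the geometric sum `Gⱼ = Σ_{i<m} z^i (λⱼ P)^(m-1-i)` satisfies
`(z - λⱼ P) Gⱼ = (z^m - λⱼ^m) • 1`, and Laplace expansion gives `det (z - λⱼ P) = z^m - λⱼ^m`.
Hence `adj (z - L̃)` is block diagonal with blocks `(∏_{ℓ≠j} (z^m - λ_ℓ^m)) • Gⱼ`: first where the
determinant does not vanish, then everywhere by continuity. Since `Q̃` only maps layer `i - 1` to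
layer `i` and `B` preserves layers, the trace only sees the `(i - 1, i)` entry of `Gⱼ`, which is
`z^(m-2) λⱼ`.
-/

section CyclicShift

variable {R : Type*} [CommRing R]

lemma permMatrix_addRight_apply {G : Type*} [AddGroup G] [DecidableEq G] (x r c : G) :
    (Equiv.addRight x).permMatrix R r c = if r + x = c then 1 else 0 := by
  simp [PEquiv.toMatrix_apply]

lemma det_smul_one_sub_smul_permMatrix_addRight_one_fin (k : ℕ) (z a : R) :
    det (z • 1 - a • (Equiv.addRight (1 : Fin (k + 1))).permMatrix R) =
      z ^ (k + 1) - a ^ (k + 1) := by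
  set A := z • 1 - a • (Equiv.addRight (1 : Fin (k + 1))).permMatrix R
  have hA (r c) : A r c = (if r = c then z else 0) - if r + 1 = c then a else 0 := by
    simp [A, one_apply]
  rcases k with _ | k
  · simp [det_unique, hA]
  have upper : (A.submatrix Fin.succ Fin.succ).IsUpperTriangular := by
    intro r c hcr
    simp only [submatrix_apply, hA, Fin.ext_iff, Fin.val_add_one, Fin.val_succ, Fin.val_last]
    have : (c : ℕ) < r := hcr
    split_ifs <;> first | omega | simp_all
  have lower : (A.submatrix Fin.castSucc Fin.succ).IsLowerTriangular := by
    intro r c hrc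
    simp only [submatrix_apply, hA, Fin.ext_iff, Fin.val_add_one, Fin.val_succ, Fin.val_castSucc,
      Fin.val_last]
    have : (r : ℕ) < c := hrc
    split_ifs <;> first | omega | simp_all
  -- Expanding along column 0, only rows 0 and `last` contribute; both minors are triangular.
  rw [det_succ_column_zero, Fin.sum_univ_succ, Fin.sum_univ_castSucc, Fin.succ_last,
    Fin.succAbove_zero, Fin.succAbove_last, det_of_isUpperTriangular upper,
    det_of_isLowerTriangular _ lower]
  have first_row : A 0 0 = z := by simp [hA]
  have middle_rows (j : Fin k) : A j.castSucc.succ 0 = 0 := by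
    simp [hA, Fin.ext_iff, Fin.val_add_one, j.isLt.ne]
  have last_row : A (Fin.last _) 0 = -a := by simp [hA]
  have upper_diag (r : Fin (k + 1)) : A r.succ r.succ = z := by simp [hA]
  have lower_diag (r : Fin (k + 1)) : A r.castSucc r.succ = -a := by
    simp [hA, Fin.ext_iff]
  simp only [submatrix_apply, first_row, middle_rows, last_row, upper_diag, lower_diag,
    Finset.prod_const, Finset.card_univ, Fintype.card_fin, Fin.val_zero, Fin.val_last, zero_mul,
    mul_zero, Finset.sum_const_zero, pow_zero, one_mul, Nat.succ_eq_add_one]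
  have sign : (-1 : R) ^ (k + 1) * (-a) ^ (k + 1) = a ^ (k + 1) := by rw [← mul_pow]; simp
  linear_combination (-a) * sign

lemma permMatrix_addRight_pow {G : Type*} [AddGroup G] [Fintype G] [DecidableEq G] (x : G)
    (k : ℕ) : (Equiv.addRight x).permMatrix R ^ k = (Equiv.addRight (k • x)).permMatrix R := by
  rw [← inv_inv (Equiv.addRight x), ← permMatrixHom_apply, ← map_pow, permMatrixHom_apply]
  congr
  ext y
  simp

variable {m : ℕ} [NeZero m]

lemma det_smul_one_sub_smul_permMatrix_addRight_one (z a : R) :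
    det (z • 1 - a • (Equiv.addRight (1 : ZMod m)).permMatrix R) = z ^ m - a ^ m := by
  obtain ⟨k, rfl⟩ := Nat.exists_eq_succ_of_ne_zero (NeZero.ne m)
  -- `ZMod (k + 1)` is `Fin (k + 1)` by definition.
  exact det_smul_one_sub_smul_permMatrix_addRight_one_fin k z a

variable (m) in
def cyclicAdjugate (z a : R) : Matrix (ZMod m) (ZMod m) R :=
  ∑ i ∈ Finset.range m,
    (z • 1) ^ i * (a • (Equiv.addRight (1 : ZMod m)).permMatrix R) ^ (m - 1 - i)

lemma smul_one_sub_smul_permMatrix_mul_cyclicAdjugate (z a : R) :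
    (z • 1 - a • (Equiv.addRight (1 : ZMod m)).permMatrix R) * cyclicAdjugate m z a =
      (z ^ m - a ^ m) • 1 := by
  rw [cyclicAdjugate, Commute.mul_geom_sum₂ ((Commute.one_left _).smul_left z), smul_pow, smul_pow,
    permMatrix_addRight_pow, nsmul_one, ZMod.natCast_self, sub_smul]
  simp

lemma cyclicAdjugate_apply_sub_one (hm : 2 ≤ m) (z a : R) (c : ZMod m) :
    cyclicAdjugate m z a (c - 1) c = z ^ (m - 2) * a := by
  have : Fact (1 < m) := ⟨hm⟩
  have shift_eq_one : ∀ x ∈ Finset.range m,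
      (c - 1 + ((m - 1 - x : ℕ) : ZMod m) = c ↔ x = m - 2) := by
    intro x hx
    rw [Finset.mem_range] at hx
    have cast_eq_one : ((m - 1 - x : ℕ) : ZMod m) = 1 ↔ m - 1 - x = 1 := by
      rw [← (ZMod.val_injective m).eq_iff, ZMod.val_natCast_of_lt (by omega), ZMod.val_one]
    rw [show x = m - 2 ↔ m - 1 - x = 1 by omega, ← cast_eq_one]
    constructor <;> intro h <;> linear_combination h
  simp only [cyclicAdjugate, smul_pow, one_pow, smul_mul_smul_comm, one_mul, Matrix.sum_apply,
    Matrix.smul_apply, permMatrix_addRight_pow, nsmul_one, permMatrix_addRight_apply, smul_eq_mul,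
    mul_ite, mul_one, mul_zero]
  rw [Finset.sum_eq_single (m - 2)]
  · rw [if_pos ((shift_eq_one _ (Finset.mem_range.2 (by omega))).2 rfl),
      show m - 1 - (m - 2) = 1 by omega, pow_one]
  · intro x hx hne
    rw [if_neg (mt (shift_eq_one x hx).1 hne)]
  · exact fun h => absurd (Finset.mem_range.2 (by omega)) h

end CyclicShift

lemma Matrix.adjugate_eq_of_mul_eq_det_smul_one {ι R : Type*} [Fintype ι] [DecidableEq ι]
    [CommRing R] {M X : Matrix ι ι R} (hdet : IsUnit M.det) (h : M * X = M.det • 1) :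
    M.adjugate = X :=
  calc M.adjugate = M⁻¹ * (M * M.adjugate) := by
        rw [← Matrix.mul_assoc, nonsing_inv_mul _ hdet, Matrix.one_mul]
    _ = M⁻¹ * (M * X) := by rw [mul_adjugate, h]
    _ = X := by rw [← Matrix.mul_assoc, nonsing_inv_mul _ hdet, Matrix.one_mul]

section Ltilde

variable (m n : ℕ) (lam : Fin n → ℂ)

lemma Ltilde_eq_blockDiagonal :
    Ltilde m n lam = blockDiagonal fun j => lam j • (Equiv.addRight (1 : ZMod m)).permMatrix ℂ := by
  ext ⟨h, j⟩ ⟨i, k⟩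
  simp [Ltilde, blockDiagonal_apply, eq_comm, ite_and]

lemma smul_one_sub_Ltilde (z : ℂ) :
    z • 1 - Ltilde m n lam =
      blockDiagonal fun j => z • 1 - lam j • (Equiv.addRight (1 : ZMod m)).permMatrix ℂ := by
  rw [Ltilde_eq_blockDiagonal, ← blockDiagonal_one, ← blockDiagonal_smul, ← blockDiagonal_sub]
  rfl

variable [NeZero m]

lemma det_smul_one_sub_Ltilde (z : ℂ) :
    det (z • 1 - Ltilde m n lam) = ∏ l, (z ^ m - lam l ^ m) := by
  simp [smul_one_sub_Ltilde, det_blockDiagonal, det_smul_one_sub_smul_permMatrix_addRight_one]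

def LtildeAdjugate (z : ℂ) : Matrix (ZMod m × Fin n) (ZMod m × Fin n) ℂ :=
  blockDiagonal fun j =>
    (∏ l ∈ Finset.univ.erase j, (z ^ m - lam l ^ m)) • cyclicAdjugate m z (lam j)

lemma smul_one_sub_Ltilde_mul_LtildeAdjugate (z : ℂ) :
    (z • 1 - Ltilde m n lam) * LtildeAdjugate m n lam z = (∏ l, (z ^ m - lam l ^ m)) • 1 := by
  rw [smul_one_sub_Ltilde, LtildeAdjugate, ← blockDiagonal_mul]
  simp_rw [mul_smul_comm, smul_one_sub_smul_permMatrix_mul_cyclicAdjugate, smul_smul,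
    Finset.prod_erase_mul _ _ (Finset.mem_univ _)]
  rw [← blockDiagonal_one, ← blockDiagonal_smul]
  rfl

lemma continuous_LtildeAdjugate : Continuous (LtildeAdjugate m n lam) := by
  unfold LtildeAdjugate cyclicAdjugate
  fun_prop

lemma adjugate_smul_one_sub_Ltilde (z : ℂ) :
    adjugate (z • 1 - Ltilde m n lam) = LtildeAdjugate m n lam z := by
  have generic (w : ℂ) (hw : ∏ l, (w ^ m - lam l ^ m) ≠ 0) :
      adjugate (w • 1 - Ltilde m n lam) = LtildeAdjugate m n lam w := by
    apply adjugate_eq_of_mul_eq_det_smul_one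
    · rw [det_smul_one_sub_Ltilde]; exact hw.isUnit
    · rw [det_smul_one_sub_Ltilde, smul_one_sub_Ltilde_mul_LtildeAdjugate]
  have finite : {w : ℂ | ∏ l, (w ^ m - lam l ^ m) = 0}.Finite := by
    open Polynomial in
    simpa [eval_prod] using finite_setOfPred_isRoot (p := ∏ l, (X ^ m - C (lam l ^ m)))
      (Finset.prod_ne_zero_iff.2 fun l _ => X_pow_sub_C_ne_zero (NeZero.pos m) _)
  exact congrFun (Continuous.ext_on (finite.countable.dense_compl ℂ) (by fun_prop)
    (continuous_LtildeAdjugate m n lam) generic) z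

end Ltilde

section Trace

variable {m n : ℕ} (g : ZMod m → ℂ) (lam phi : Fin n → ℂ)
  (V : ZMod m → Matrix (Fin n) (Fin n) ℂ)

lemma QtildeS_apply_of_ne {p q : ZMod m × Fin n} (h : p.1 ≠ q.1 + 1) :
    QtildeS m n g lam phi V p q = 0 := by
  simp [QtildeS, h]

lemma trace_QtildeS_mul_mul_Bmat [NeZero m] (X : Matrix (ZMod m × Fin n) (ZMod m × Fin n) ℂ) :
    trace (QtildeS m n g lam phi V * X * Bmat m n V) =
      ∑ i, ∑ j, ∑ t, ∑ s,
        V i t j * QtildeS m n g lam phi V (i, j) (i - 1, s) * X (i - 1, s) (i, t) := by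
  simp only [trace, diag, mul_apply, Fintype.sum_prod_type, Bmat, of_apply, mul_ite, mul_zero]
  refine Finset.sum_congr rfl fun i _ => Finset.sum_congr rfl fun j _ => ?_
  rw [Finset.sum_eq_single i (fun h _ hi => by simp [hi]) (by simp)]
  refine Finset.sum_congr rfl fun t _ => ?_
  rw [if_pos rfl, Finset.sum_eq_single (i - 1), Finset.sum_mul]
  · exact Finset.sum_congr rfl fun s _ => by ring
  · intro a _ ha
    simp [QtildeS_apply_of_ne g lam phi V (p := (i, j)) (q := (a, _)) (by grind)]
  · simp

end Trace

theorem spin_Cfun_formula_general (m n d : ℕ) [NeZero m] (hm : 2 ≤ m)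
    (lam phi : Fin n → ℂ) (g : ZMod m → ℂ)
    (vt : ZMod m → Matrix (Fin n) (Fin d) ℂ) (wt : ZMod m → Matrix (Fin d) (Fin n) ℂ)
    (z : ℂ) :
    CfunS m n g lam phi (fun i => vt i * wt i) z =
      ∑ i : ZMod m, ∑ j : Fin n, ∑ t : Fin n,
        (vt i * wt i) t j * QtildeS m n g lam phi (fun i' => vt i' * wt i') (i, j) (i - 1, t) *
          lam t * z ^ (m - 2) * ∏ l ∈ Finset.univ.erase t, (z ^ m - lam l ^ m) := by
  rw [CfunS, adjugate_smul_one_sub_Ltilde, trace_QtildeS_mul_mul_Bmat]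
  refine Finset.sum_congr rfl fun i _ => Finset.sum_congr rfl fun j _ =>
    Finset.sum_congr rfl fun t _ => ?_
  rw [Finset.sum_eq_single t]
  · rw [LtildeAdjugate, blockDiagonal_apply_eq, Matrix.smul_apply, cyclicAdjugate_apply_sub_one hm]
    ring
  · intro s _ hst
    rw [LtildeAdjugate, blockDiagonal_apply_ne _ _ _ hst, mul_zero]
  · simp

/-- Spin case, `m ≥ 2`:
`C(z) = Σ_{i=0}^{m−1} Σ_{j} Σ_{t} (V_i)_{tj} · Q̃_{(i,j),(i−1,t)} · λ_t · z^{m−2} ·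
∏_{ℓ≠t}(z^m − λ_ℓ^m)`. -/
theorem spin_Cfun_formula (m n d : ℕ) [NeZero m] (hm : 2 ≤ m) (hn : 0 < n) (hd : 0 < d)
    (lam phi : Fin n → ℂ) (g : ZMod m → ℂ)
    (hlam : ∀ j, lam j ≠ 0)
    (hsep : ∀ j k : Fin n, j ≠ k → lam j ^ m ≠ lam k ^ m)
    (vt : ZMod m → Matrix (Fin n) (Fin d) ℂ) (wt : ZMod m → Matrix (Fin d) (Fin n) ℂ)
    (hV : ∀ j : Fin n, ∑ i : ZMod m, (vt i * wt i) j j = gAbs m g) (z : ℂ) :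
    CfunS m n g lam phi (fun i => vt i * wt i) z =
      ∑ i : ZMod m, ∑ j : Fin n, ∑ t : Fin n,
        (vt i * wt i) t j * QtildeS m n g lam phi (fun i' => vt i' * wt i') (i, j) (i - 1, t) *
          lam t * z ^ (m - 2) * ∏ l ∈ Finset.univ.erase t, (z ^ m - lam l ^ m) :=
  spin_Cfun_formula_general m n d hm lam phi g vt wt z
end
end

section
/- Let m be a positive integer, h an integer with 0 ≤ h ≤ m−1, and x, y nonzero complex numbers with x^m ≠ y^m. Then the derivative at the point x of the function t ↦ t^{m−h−1}·y^{h}/(t^m − y^m) equals the derivative at the point y of the function s ↦ s^{h+1}·x^{m−h−2}/(s^m − x^m), where x^{m−h−2} denotes the integer power x^{m−h−2} (equal to 1/x when h = m−1). -/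
/-- For `0 ≤ h ≤ m−1` and nonzero `x, y ∈ ℂ` with `x^m ≠ y^m`, the
derivative at `x` of `t ↦ t^{m−h−1}·y^{h}/(t^m − y^m)` equals the derivative at `y` of
`s ↦ s^{h+1}·x^{m−h−2}/(s^m − x^m)`, where `x^{m−h−2}` is the integer power (equal to `1/x`
when `h = m−1`). -/
theorem deriv_symmetry_key (m : ℕ) (hm : 0 < m) (h : ℕ) (hh : h ≤ m - 1)
    (x y : ℂ) (hx : x ≠ 0) (hy : y ≠ 0) (hxy : x ^ m ≠ y ^ m) :
    deriv (fun t : ℂ => t ^ (m - h - 1) * y ^ h / (t ^ m - y ^ m)) x =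
      deriv (fun s : ℂ => s ^ (h + 1) * x ^ ((m : ℤ) - (h : ℤ) - 2) / (s ^ m - x ^ m)) y := by
  obtain ⟨k, rfl⟩ : ∃ k, m = h + 1 + k := ⟨m - h - 1, by omega⟩
  set m := h + 1 + k with hm'
  have hden1 : x ^ m - y ^ m ≠ 0 := sub_ne_zero.mpr hxy
  have hden2 : y ^ m - x ^ m ≠ 0 := sub_ne_zero.mpr hxy.symm
  have d1 : HasDerivAt (fun t : ℂ => t ^ (m - h - 1) * y ^ h / (t ^ m - y ^ m))
      (((↑(m - h - 1) * x ^ (m - h - 1 - 1) * y ^ h) * (x ^ m - y ^ m)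
        - (x ^ (m - h - 1) * y ^ h) * (↑m * x ^ (m - 1))) / (x ^ m - y ^ m) ^ 2) x :=
    ((hasDerivAt_pow (m - h - 1) x).mul_const (y ^ h)).div
      (((hasDerivAt_pow m x).sub_const (y ^ m))) hden1
  have d2 : HasDerivAt (fun s : ℂ => s ^ (h + 1) * x ^ ((m : ℤ) - (h : ℤ) - 2) / (s ^ m - x ^ m))
      (((↑(h + 1) * y ^ (h + 1 - 1) * x ^ ((m : ℤ) - (h : ℤ) - 2)) * (y ^ m - x ^ m)
        - (y ^ (h + 1) * x ^ ((m : ℤ) - (h : ℤ) - 2)) * (↑m * y ^ (m - 1))) / (y ^ m - x ^ m) ^ 2) y :=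
    ((hasDerivAt_pow (h + 1) y).mul_const (x ^ ((m : ℤ) - (h : ℤ) - 2))).div
      (((hasDerivAt_pow m y).sub_const (x ^ m))) hden2
  rw [d1.deriv, d2.deriv]
  have e1 : m - h - 1 = k := by omega
  have e2 : m - h - 1 - 1 = k - 1 := by omega
  have e3 : m - 1 = h + k := by omega
  have e4 : h + 1 - 1 = h := by omega
  have hz : x ^ ((m : ℤ) - (h : ℤ) - 2) = x ^ k * x⁻¹ := by
    have : (m : ℤ) - (h : ℤ) - 2 = (k : ℤ) - 1 := by rw [hm']; push_cast; ring
    rw [this, zpow_sub₀ hx, zpow_natCast, zpow_one, div_eq_mul_inv]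
  rw [e1, e3, e4, hz]
  have hkx : (k : ℂ) * x ^ (k - 1) = (k : ℂ) * x ^ k * x⁻¹ := by
    cases k with
    | zero => simp
    | succ n =>
      have : (n + 1 : ℕ) - 1 = n := rfl
      rw [this, pow_succ]
      field_simp
  rw [hkx]
  have hm2 : (m : ℂ) = (h : ℂ) + 1 + k := by rw [hm']; push_cast; ring
  have hxm : x ^ m = x ^ h * x * x ^ k := by rw [hm']; ring
  have hym : y ^ m = y ^ h * y * y ^ k := by rw [hm']; ring
  rw [hm2, hxm, hym]
  push_cast
  field_simp
  ring
end

section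
/- Fix distinct indices j, k ∈ {1,…,n}. Let F_j(x) denote the function obtained from f_j by replacing λ_k with the variable x (all other λ's and all matrices V_i fixed), and let F_k(x) denote the function obtained from f_k by replacing λ_j with x. Then F_j is differentiable at x = λ_k, F_k is differentiable at x = λ_j, and F_j′(λ_k) = F_k′(λ_j); that is, the spin functions satisfy the symmetry ∂f_j/∂λ_k = ∂f_k/∂λ_j. -/
open BigOperators

noncomputable section

/-- The spin function
`fₖ = −(1/(m·|g|))·Σ_{h=0}^{m−1}Σ_{i=0}^{m−1}Σ_{t≠k}(V_i)ₖₜ·(V_{i−h−1})ₜₖ·λₜ^{m−h−1}·λₖ^{h}/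
(λₜ^m − λₖ^m)`, indices of `V` read modulo `m`. -/
def fSpin (m n : ℕ) (g : ZMod m → ℂ) (V : ZMod m → Matrix (Fin n) (Fin n) ℂ)
    (lam : Fin n → ℂ) (k : Fin n) : ℂ :=
  -(1 / ((m : ℂ) * gAbs m g)) *
    ∑ h ∈ Finset.range m, ∑ i ∈ Finset.range m, ∑ t ∈ Finset.univ.erase k,
      (V (i : ZMod m)) k t * (V ((i : ZMod m) - (h : ZMod m) - 1)) t k *
        lam t ^ (m - h - 1) * lam k ^ h / (lam t ^ m - lam k ^ m)

/-!
Only the summand `t = k` of `f_j` depends on `λ_k`, so with `a = λ_k`, `b = λ_j`,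
`∂f_j/∂λ_k = −(1/(m|g|)) Σ_h c_{jk}(h) b^h ∂_a[a^{m-h-1}/(a^m − b^m)]`, where
`c_{jk}(h) = Σ_i (V_i)_{jk}(V_{i-h-1})_{kj}`. The same expression with `(j, a)` and `(k, b)`
swapped gives `∂f_k/∂λ_j`. The two sums agree term by term after reindexing `h ↦ h'` with
`h + h' ≡ −2 (mod m)`: shifting `i` by `h + 1` turns `c_{jk}(h)` into `c_{kj}(h')`, and
`b^h ∂_a[a^{m-h-1}/(a^m − b^m)] = a^{h'} ∂_b[b^{m-h'-1}/(b^m − a^m)]` is a rational identity.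
-/

open Finset

namespace SpinSymmetry

/-- The involution of `{0, …, m-1}` with `h + reflect m h ≡ -2 (mod m)`. -/
def reflect (m h : ℕ) : ℕ := if h = m - 1 then m - 1 else m - 2 - h

lemma reflect_lt {m h : ℕ} (hm : h < m) : reflect m h < m := by
  unfold reflect; split <;> omega

lemma reflect_reflect {m h : ℕ} (hm : h < m) : reflect m (reflect m h) = h := by
  unfold reflect; split <;> split <;> omega

lemma natCast_reflect {m h : ℕ} (hm : h < m) :
    ((reflect m h : ℕ) : ZMod m) = -((h : ZMod m) + 2) := by
  have hdvd : m ∣ reflect m h + (h + 2) := by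
    unfold reflect; split
    · exact ⟨2, by omega⟩
    · exact ⟨1, by omega⟩
  have hzero := (ZMod.natCast_eq_zero_iff _ _).2 hdvd
  push_cast at hzero
  exact eq_neg_of_add_eq_zero_left hzero

lemma sum_range_natCast_eq_sum_zmod {M : Type*} [AddCommMonoid M] (m : ℕ) [NeZero m]
    (f : ZMod m → M) : ∑ i ∈ range m, f i = ∑ i : ZMod m, f i :=
  sum_nbij' (fun i => (i : ZMod m)) ZMod.val (fun _ _ => mem_univ _)
    (fun b _ => mem_range.2 (ZMod.val_lt b))
    (fun _ ha => ZMod.val_cast_of_lt (mem_range.1 ha)) (fun b _ => ZMod.natCast_zmod_val b)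
    (fun _ _ => rfl)

variable {m n : ℕ}

def spinCoeff (V : ZMod m → Matrix (Fin n) (Fin n) ℂ) (j k : Fin n) (h : ℕ) : ℂ :=
  ∑ i ∈ range m, V i j k * V (i - h - 1) k j

lemma spinCoeff_reflect [NeZero m] (V : ZMod m → Matrix (Fin n) (Fin n) ℂ) (j k : Fin n)
    {h : ℕ} (hm : h < m) : spinCoeff V k j (reflect m h) = spinCoeff V j k h := by
  unfold spinCoeff
  rw [sum_range_natCast_eq_sum_zmod m (fun z => V z k j * V (z - (reflect m h : ℕ) - 1) j k),
    sum_range_natCast_eq_sum_zmod m (fun z => V z j k * V (z - h - 1) k j)]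
  refine Fintype.sum_equiv (Equiv.addRight ((h : ZMod m) + 1)) _ _ fun i => ?_
  rw [Equiv.coe_addRight, natCast_reflect hm, mul_comm,
    show i - -((h : ZMod m) + 2) - 1 = i + (h + 1) by ring,
    show i + ((h : ZMod m) + 1) - h - 1 = i by ring]

/-- The derivative of `x ↦ x ^ p / (x ^ m - b ^ m)` at `a`, by the quotient rule. -/
def powQuotDeriv (m p : ℕ) (a b : ℂ) : ℂ :=
  (p * a ^ (p - 1) * (a ^ m - b ^ m) - a ^ p * (m * a ^ (m - 1))) / (a ^ m - b ^ m) ^ 2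

lemma hasDerivAt_pow_div_pow_sub_pow (m p : ℕ) {a b : ℂ} (hab : a ^ m ≠ b ^ m) :
    HasDerivAt (fun x : ℂ => x ^ p / (x ^ m - b ^ m)) (powQuotDeriv m p a b) a :=
  (hasDerivAt_pow p a).div ((hasDerivAt_pow m a).sub_const (b ^ m)) (sub_ne_zero.2 hab)

lemma pow_mul_powQuotDeriv_swap (h q : ℕ) {a b : ℂ} (hab : a ^ (h + q + 2) ≠ b ^ (h + q + 2)) :
    b ^ h * powQuotDeriv (h + q + 2) (q + 1) a b =
      a ^ q * powQuotDeriv (h + q + 2) (h + 1) b a := by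
  have hab' : a ^ (h + q + 2) - b ^ (h + q + 2) ≠ 0 := sub_ne_zero.2 hab
  have hba' : b ^ (h + q + 2) - a ^ (h + q + 2) ≠ 0 := sub_ne_zero.2 hab.symm
  simp only [powQuotDeriv, Nat.add_sub_cancel, show h + q + 2 - 1 = h + q + 1 by omega]
  field_simp
  push_cast
  ring

lemma pow_mul_powQuotDeriv_zero_swap (m : ℕ) {a b : ℂ} (hab : a ^ m ≠ b ^ m) :
    b ^ (m - 1) * powQuotDeriv m 0 a b = a ^ (m - 1) * powQuotDeriv m 0 b a := by
  have hab' : a ^ m - b ^ m ≠ 0 := sub_ne_zero.2 hab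
  have hba' : b ^ m - a ^ m ≠ 0 := sub_ne_zero.2 hab.symm
  simp only [powQuotDeriv]
  field_simp
  ring

lemma pow_mul_powQuotDeriv_reflect {m h : ℕ} (hm : h < m) {a b : ℂ} (hab : a ^ m ≠ b ^ m) :
    b ^ h * powQuotDeriv m (m - h - 1) a b =
      a ^ reflect m h * powQuotDeriv m (m - reflect m h - 1) b a := by
  by_cases htop : h = m - 1
  · have hrefl : reflect m h = h := by unfold reflect; rw [if_pos htop, htop]
    rw [hrefl, show m - h - 1 = 0 by omega, htop]
    exact pow_mul_powQuotDeriv_zero_swap m hab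
  · obtain ⟨q, rfl⟩ : ∃ q, m = h + q + 2 := ⟨m - h - 2, by omega⟩
    have hrefl : reflect (h + q + 2) h = q := by unfold reflect; rw [if_neg htop]; omega
    rw [hrefl, show h + q + 2 - h - 1 = q + 1 by omega, show h + q + 2 - q - 1 = h + 1 by omega]
    exact pow_mul_powQuotDeriv_swap h q hab

lemma sum_spinCoeff_mul_powQuotDeriv_comm [NeZero m] (V : ZMod m → Matrix (Fin n) (Fin n) ℂ)
    (j k : Fin n) {a b : ℂ} (hab : a ^ m ≠ b ^ m) :
    ∑ h ∈ range m, spinCoeff V j k h * b ^ h * powQuotDeriv m (m - h - 1) a b =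
      ∑ h ∈ range m, spinCoeff V k j h * a ^ h * powQuotDeriv m (m - h - 1) b a := by
  refine sum_nbij' (reflect m) (reflect m) (fun h hh => mem_range.2 (reflect_lt (mem_range.1 hh)))
    (fun h hh => mem_range.2 (reflect_lt (mem_range.1 hh)))
    (fun h hh => reflect_reflect (mem_range.1 hh)) (fun h hh => reflect_reflect (mem_range.1 hh))
    fun h hh => ?_
  have hm := mem_range.1 hh
  rw [mul_assoc, pow_mul_powQuotDeriv_reflect hm hab, spinCoeff_reflect V j k hm, mul_assoc]

lemma hasDerivAt_update_summand {ι : Type*} [DecidableEq ι] (lam : ι → ℂ) {j k : ι}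
    (hjk : j ≠ k) (hkj : lam k ^ m ≠ lam j ^ m) (c : ℂ) (p h : ℕ) (t : ι) :
    HasDerivAt (fun x : ℂ => c * Function.update lam k x t ^ p * Function.update lam k x j ^ h /
        (Function.update lam k x t ^ m - Function.update lam k x j ^ m))
      (if t = k then c * lam j ^ h * powQuotDeriv m p (lam k) (lam j) else 0) (lam k) := by
  by_cases htk : t = k
  · subst htk
    simp only [Function.update_self, Function.update_of_ne hjk, if_true]
    have hfun : (fun x => c * x ^ p * lam j ^ h / (x ^ m - lam j ^ m)) =
        fun x => c * lam j ^ h * (x ^ p / (x ^ m - lam j ^ m)) := by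
      funext x; ring
    rw [hfun]
    exact (hasDerivAt_pow_div_pow_sub_pow m p hkj).const_mul _
  · simp only [Function.update_of_ne htk, Function.update_of_ne hjk, if_neg htk]
    exact hasDerivAt_const _ _

lemma hasDerivAt_fSpin_update (g : ZMod m → ℂ) (V : ZMod m → Matrix (Fin n) (Fin n) ℂ)
    (lam : Fin n → ℂ) {j k : Fin n} (hjk : j ≠ k) (hkj : lam k ^ m ≠ lam j ^ m) :
    HasDerivAt (fun x : ℂ => fSpin m n g V (Function.update lam k x) j)
      (-(1 / ((m : ℂ) * gAbs m g)) *
        ∑ h ∈ range m, spinCoeff V j k h * lam j ^ h * powQuotDeriv m (m - h - 1) (lam k) (lam j))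
      (lam k) := by
  unfold fSpin
  refine ((HasDerivAt.fun_sum fun (h : ℕ) _ => HasDerivAt.fun_sum fun (i : ℕ) _ =>
    HasDerivAt.fun_sum fun t _ => hasDerivAt_update_summand lam hjk hkj
      (V i j t * V (i - h - 1) t j) (m - h - 1) h t).const_mul _).congr_deriv ?_
  congr 1
  refine sum_congr rfl fun h _ => ?_
  simp only [spinCoeff, sum_mul, sum_ite_eq', mem_erase, ne_eq, hjk.symm, not_false_eq_true,
    mem_univ, and_self, if_true]

end SpinSymmetry

open SpinSymmetry in
theorem spin_f_symmetry_general (m n d : ℕ) [NeZero m]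
    (lam : Fin n → ℂ) (g : ZMod m → ℂ)
    (hsep : ∀ a b : Fin n, a ≠ b → lam a ^ m ≠ lam b ^ m)
    (vt : ZMod m → Matrix (Fin n) (Fin d) ℂ) (wt : ZMod m → Matrix (Fin d) (Fin n) ℂ)
    (j k : Fin n) (hjk : j ≠ k) :
    DifferentiableAt ℂ
      (fun x : ℂ => fSpin m n g (fun i => vt i * wt i) (Function.update lam k x) j)
      (lam k) ∧
    DifferentiableAt ℂ
      (fun x : ℂ => fSpin m n g (fun i => vt i * wt i) (Function.update lam j x) k)
      (lam j) ∧
    deriv (fun x : ℂ => fSpin m n g (fun i => vt i * wt i) (Function.update lam k x) j)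
        (lam k) =
      deriv (fun x : ℂ => fSpin m n g (fun i => vt i * wt i) (Function.update lam j x) k)
        (lam j) := by
  have hj := hasDerivAt_fSpin_update g (fun i => vt i * wt i) lam hjk (hsep k j hjk.symm)
  have hk := hasDerivAt_fSpin_update g (fun i => vt i * wt i) lam hjk.symm (hsep j k hjk)
  refine ⟨hj.differentiableAt, hk.differentiableAt, ?_⟩
  rw [hj.deriv, hk.deriv, sum_spinCoeff_mul_powQuotDeriv_comm _ j k (hsep k j hjk.symm)]

/-- For distinct `j, k`, let `F_j(x)` be `f_j` with `λₖ` replaced by `x`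
and `F_k(x)` be `f_k` with `λⱼ` replaced by `x`. Then `F_j` is differentiable at `λₖ`, `F_k`
is differentiable at `λⱼ`, and `F_j′(λₖ) = F_k′(λⱼ)`; that is, `∂f_j/∂λ_k = ∂f_k/∂λ_j`. -/
theorem spin_f_symmetry (m n d : ℕ) [NeZero m] (hn : 0 < n) (hd : 0 < d)
    (lam : Fin n → ℂ) (g : ZMod m → ℂ)
    (hlam : ∀ j, lam j ≠ 0)
    (hsep : ∀ a b : Fin n, a ≠ b → lam a ^ m ≠ lam b ^ m)
    (hg : gAbs m g ≠ 0)
    (vt : ZMod m → Matrix (Fin n) (Fin d) ℂ) (wt : ZMod m → Matrix (Fin d) (Fin n) ℂ)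
    (j k : Fin n) (hjk : j ≠ k) :
    DifferentiableAt ℂ
      (fun x : ℂ => fSpin m n g (fun i => vt i * wt i) (Function.update lam k x) j)
      (lam k) ∧
    DifferentiableAt ℂ
      (fun x : ℂ => fSpin m n g (fun i => vt i * wt i) (Function.update lam j x) k)
      (lam j) ∧
    deriv (fun x : ℂ => fSpin m n g (fun i => vt i * wt i) (Function.update lam k x) j)
        (lam k) =
      deriv (fun x : ℂ => fSpin m n g (fun i => vt i * wt i) (Function.update lam j x) k)
        (lam j) :=
  spin_f_symmetry_general m n d lam g hsep vt wt j k hjk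
end
end
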